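/- arXiv:2304.03886 — 2 statements merged into one kernel-verified Lean document; each statement's English description precedes it below -/
import Mathlib

section
/- Let f(x) = (1/2)xᵀF x + pᵀx + r and φ(x) = (1/2)xᵀΦ x with F, Φ symmetric positive definite, μ_f I ⪯ F ⪯ L_f I, μ_φ I ⪯ Φ ⪯ L_φ I. With μ_φ̄ = 1/L_φ, L_φ̄ = 1/μ_φ and stepsize η = 2/(L_f L_φ̄ + μ_f μ_φ̄), the mirror descent iteration z_{k+1} = z_k − η∇f(∇φ̄(z_k)) (where φ̄(z) = (1/2)zᵀΦ⁻¹z) converges linearly to z^opt = ∇φ(x^opt), x^opt = −F⁻¹p, with rate ρ = (κ_f κ_φ̄ − 1)/(κ_f κ_φ̄ + 1), κ_f = L_f/μ_f, κ_φ̄ = L_φ̄/μ_φ̄: that is, there exists c > 0 with ‖z_k − z^opt‖ ≤ c ρ^k ‖z_0 − z^opt‖ for all k. -/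
/-!
The error `e_k = z_k - z^opt` evolves linearly, `e_{k+1} = (Φ - η F) Φ⁻¹ e_k`, because
`∇f(x^opt) = 0`. The stepsize is chosen exactly so that `-ρ Φ ⪯ Φ - η F ⪯ ρ Φ` in the Loewner
order, and these two bounds make the quadratic form `V(e) = eᵀ Φ⁻¹ e` contract by `ρ²` at every
step. Since `μ_φ I ⪯ Φ ⪯ L_φ I`, `V` is equivalent to the squared norm, which yields the
constant `c`.
-/

open Matrix

variable {n : Type*}

lemma Matrix.posSemidef_smul_sub_smul [DecidableEq n] {A B : Matrix n n ℝ} {a b μ L : ℝ}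
    (ha : 0 ≤ a) (hb : 0 ≤ b) (hA : (A - μ • 1).PosSemidef) (hB : (L • 1 - B).PosSemidef)
    (h : a * L = b * μ) : (b • A - a • B).PosSemidef := by
  have hsplit : b • A - a • B = b • (A - μ • 1) + a • (L • 1 - B) := by
    linear_combination (norm := module) h.symm • (1 : Matrix n n ℝ)
  rw [hsplit]
  exact (hA.smul hb).add (hB.smul ha)

variable [Fintype n]

-- `n → ℝ` carries the sup norm.
lemma sq_norm_le_dotProduct_self (x : n → ℝ) : ‖x‖ ^ 2 ≤ x ⬝ᵥ x := by
  have hx : 0 ≤ x ⬝ᵥ x := Finset.sum_nonneg fun i _ => mul_self_nonneg (x i)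
  refine (Real.le_sqrt (norm_nonneg x) hx).1 <|
    (pi_norm_le_iff_of_nonneg (Real.sqrt_nonneg _)).2 fun i => Real.abs_le_sqrt ?_
  rw [sq]
  exact Finset.single_le_sum (f := fun j => x j * x j) (fun j _ => mul_self_nonneg (x j))
    (Finset.mem_univ i)

lemma dotProduct_self_le_card_mul_sq_norm (x : n → ℝ) :
    x ⬝ᵥ x ≤ Fintype.card n * ‖x‖ ^ 2 := by
  rw [← nsmul_eq_mul]
  refine Finset.sum_le_card_nsmul _ _ _ fun i _ => ?_
  rw [← sq, ← sq_abs, ← Real.norm_eq_abs]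
  exact pow_le_pow_left₀ (norm_nonneg _) (norm_le_pi_norm x i) 2

namespace Matrix

lemma IsHermitian.dotProduct_mulVec_comm {M : Matrix n n ℝ} (hM : M.IsHermitian) (a b : n → ℝ) :
    a ⬝ᵥ M *ᵥ b = b ⬝ᵥ M *ᵥ a := by
  rw [dotProduct_mulVec, ← mulVec_transpose, ← conjTranspose_eq_transpose_of_trivial, hM.eq,
    dotProduct_comm]

lemma PosSemidef.dotProduct_mulVec_self_nonneg {M : Matrix n n ℝ} (hM : M.PosSemidef)
    (x : n → ℝ) : 0 ≤ x ⬝ᵥ M *ᵥ x := by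
  simpa using hM.dotProduct_mulVec_nonneg x

lemma PosSemidef.two_mul_dotProduct_mulVec_le {M : Matrix n n ℝ} (hM : M.PosSemidef) {t : ℝ}
    (ht : 0 < t) (a b : n → ℝ) :
    2 * (a ⬝ᵥ M *ᵥ b) ≤ t * (a ⬝ᵥ M *ᵥ a) + t⁻¹ * (b ⬝ᵥ M *ᵥ b) := by
  have h := mul_nonneg (inv_nonneg.2 ht.le) (hM.dotProduct_mulVec_self_nonneg (t • a - b))
  simp only [mulVec_sub, mulVec_smul, dotProduct_sub, sub_dotProduct, smul_dotProduct,
    dotProduct_smul, smul_eq_mul, hM.isHermitian.dotProduct_mulVec_comm b a] at h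
  have hexpand :
      t⁻¹ * (t * (t * (a ⬝ᵥ M *ᵥ a) - a ⬝ᵥ M *ᵥ b) - (t * (a ⬝ᵥ M *ᵥ b) - b ⬝ᵥ M *ᵥ b))
        = t * (a ⬝ᵥ M *ᵥ a) + t⁻¹ * (b ⬝ᵥ M *ᵥ b) - 2 * (a ⬝ᵥ M *ᵥ b) := by
    field_simp
    ring
  linarith

lemma two_mul_dotProduct_mulVec_le_of_posSemidef {P G : Matrix n n ℝ} {ρ t : ℝ}
    (hadd : (ρ • P + G).PosSemidef) (hsub : (ρ • P - G).PosSemidef) (ht : 0 < t)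
    (u v : n → ℝ) :
    2 * (u ⬝ᵥ G *ᵥ v) ≤ ρ * (t * (u ⬝ᵥ P *ᵥ u) + t⁻¹ * (v ⬝ᵥ P *ᵥ v)) := by
  have h₁ := hadd.two_mul_dotProduct_mulVec_le ht u v
  have h₂ := hsub.two_mul_dotProduct_mulVec_le ht u (-v)
  simp only [add_mulVec, sub_mulVec, smul_mulVec, mulVec_neg, dotProduct_add, dotProduct_sub,
    dotProduct_neg, neg_dotProduct, dotProduct_smul, smul_eq_mul] at h₁ h₂
  linarith

variable [DecidableEq n]

lemma mulVec_nonsing_inv_mulVec {A : Matrix n n ℝ} (hA : IsUnit A.det) (x : n → ℝ) :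
    A *ᵥ (A⁻¹ *ᵥ x) = x := by
  rw [mulVec_mulVec, mul_nonsing_inv _ hA, one_mulVec]

lemma nonsing_inv_mulVec_mulVec {A : Matrix n n ℝ} (hA : IsUnit A.det) (x : n → ℝ) :
    A⁻¹ *ᵥ (A *ᵥ x) = x := by
  rw [mulVec_mulVec, nonsing_inv_mul _ hA, one_mulVec]

lemma inv_smul_one {c : ℝ} (hc : c ≠ 0) : (c • 1 : Matrix n n ℝ)⁻¹ = c⁻¹ • 1 :=
  inv_eq_left_inv (by rw [smul_mul_smul, one_mul, inv_mul_cancel₀ hc, one_smul])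

/-- `-ρ P ⪯ G ⪯ ρ P` says that `P^{-1/2} G P^{-1/2}` has operator norm at most `ρ`, i.e. that
`e ↦ G P⁻¹ e` is `ρ`-Lipschitz for the norm `√(eᵀ P⁻¹ e)`. -/
lemma PosDef.dotProduct_inv_mulVec_contract {P G : Matrix n n ℝ} (hP : P.PosDef) {ρ : ℝ}
    (hρ : 0 ≤ ρ) (hadd : (ρ • P + G).PosSemidef) (hsub : (ρ • P - G).PosSemidef) (e : n → ℝ) :
    (G *ᵥ (P⁻¹ *ᵥ e)) ⬝ᵥ P⁻¹ *ᵥ (G *ᵥ (P⁻¹ *ᵥ e)) ≤ ρ ^ 2 * (e ⬝ᵥ P⁻¹ *ᵥ e) := by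
  have hdet := hP.det_pos.ne'.isUnit
  set v := P⁻¹ *ᵥ e
  set u := P⁻¹ *ᵥ (G *ᵥ v)
  have hu : u ⬝ᵥ P *ᵥ u = u ⬝ᵥ G *ᵥ v := by rw [mulVec_nonsing_inv_mulVec hdet]
  have hv : v ⬝ᵥ P *ᵥ v = e ⬝ᵥ v := by rw [mulVec_nonsing_inv_mulVec hdet, dotProduct_comm]
  rw [dotProduct_comm, ← hv]
  rcases hρ.eq_or_lt with rfl | hρ
  · have h := two_mul_dotProduct_mulVec_le_of_posSemidef hadd hsub one_pos u v
    rw [zero_mul] at h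
    rw [sq, zero_mul, zero_mul]
    linarith
  · have h := two_mul_dotProduct_mulVec_le_of_posSemidef hadd hsub (inv_pos.2 hρ) u v
    rw [hu, inv_inv, mul_add, ← mul_assoc, ← mul_assoc, mul_inv_cancel₀ hρ.ne', one_mul] at h
    linarith

lemma PosDef.dotProduct_inv_mulVec_le {P Q : Matrix n n ℝ} (hP : P.PosDef)
    (hPQ : (Q - P).PosSemidef) (x : n → ℝ) : x ⬝ᵥ Q⁻¹ *ᵥ x ≤ x ⬝ᵥ P⁻¹ *ᵥ x := by
  have hQ : Q.PosDef := by simpa using hP.add_posSemidef hPQ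
  set u := P⁻¹ *ᵥ x
  set w := Q⁻¹ *ᵥ x
  have hPu : P *ᵥ u = x := mulVec_nonsing_inv_mulVec hP.det_pos.ne'.isUnit x
  have hQw : Q *ᵥ w = x := mulVec_nonsing_inv_mulVec hQ.det_pos.ne'.isUnit x
  have hamgm := hP.posSemidef.two_mul_dotProduct_mulVec_le one_pos w u
  have hPw := hPQ.dotProduct_mulVec_self_nonneg w
  rw [sub_mulVec, dotProduct_sub, hQw, sub_nonneg] at hPw
  rw [hPu, inv_one, one_mul, one_mul, dotProduct_comm u x] at hamgm
  rw [dotProduct_comm x w]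
  linarith

lemma sq_norm_le_mul_dotProduct_inv_mulVec {Φ : Matrix n n ℝ} (hΦ : Φ.PosDef) {L : ℝ}
    (hL : 0 < L) (hΦL : (L • 1 - Φ).PosSemidef) (x : n → ℝ) :
    ‖x‖ ^ 2 ≤ L * (x ⬝ᵥ Φ⁻¹ *ᵥ x) := by
  have h := hΦ.dotProduct_inv_mulVec_le hΦL x
  rw [inv_smul_one hL.ne', smul_mulVec, one_mulVec, dotProduct_smul, smul_eq_mul,
    inv_mul_le_iff₀ hL] at h
  exact (sq_norm_le_dotProduct_self x).trans h

lemma dotProduct_inv_mulVec_le_card_div_mul_sq_norm {Φ : Matrix n n ℝ} {μ : ℝ} (hμ : 0 < μ)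
    (hμΦ : (Φ - μ • 1).PosSemidef) (x : n → ℝ) :
    x ⬝ᵥ Φ⁻¹ *ᵥ x ≤ Fintype.card n / μ * ‖x‖ ^ 2 := by
  have h := (PosDef.one.smul hμ).dotProduct_inv_mulVec_le hμΦ x
  rw [inv_smul_one hμ.ne', smul_mulVec, one_mulVec, dotProduct_smul, smul_eq_mul] at h
  calc x ⬝ᵥ Φ⁻¹ *ᵥ x ≤ μ⁻¹ * (x ⬝ᵥ x) := h
    _ ≤ μ⁻¹ * (Fintype.card n * ‖x‖ ^ 2) := by
      gcongr
      exact dotProduct_self_le_card_mul_sq_norm x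
    _ = Fintype.card n / μ * ‖x‖ ^ 2 := by ring

end Matrix

lemma exists_pos_le_mul_pow_of_sq_le {a : ℕ → ℝ} {b ρ C : ℝ} (hC : 0 ≤ C) (hb : 0 ≤ b)
    (hρ : 0 ≤ ρ) (h : ∀ k, a k ^ 2 ≤ C * (ρ ^ k * b) ^ 2) :
    ∃ c > 0, ∀ k, a k ≤ c * ρ ^ k * b := by
  refine ⟨√C + 1, by positivity, fun k => ?_⟩
  calc a k ≤ √(C * (ρ ^ k * b) ^ 2) := (le_abs_self _).trans (Real.abs_le_sqrt (h k))
    _ = √C * (ρ ^ k * b) := by rw [Real.sqrt_mul hC, Real.sqrt_sq (by positivity)]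
    _ ≤ (√C + 1) * ρ ^ k * b := by
      rw [mul_assoc]
      gcongr
      linarith

lemma mirror_descent_rate_spec {μf Lf μφ Lφ μb Lb η ρ : ℝ} (hμf : 0 < μf) (hfL : μf ≤ Lf)
    (hμφ : 0 < μφ) (hφL : μφ ≤ Lφ) (hμb : μb = 1 / Lφ) (hLb : Lb = 1 / μφ)
    (hη : η = 2 / (Lf * Lb + μf * μb))
    (hρ : ρ = ((Lf / μf) * (Lb / μb) - 1) / ((Lf / μf) * (Lb / μb) + 1)) :
    0 < η ∧ 0 ≤ ρ ∧ ρ ≤ 1 ∧ (1 - ρ) * Lφ = η * μf ∧ (1 + ρ) * μφ = η * Lf := by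
  have hLφ : 0 < Lφ := hμφ.trans_le hφL
  have hLf : 0 < Lf := hμf.trans_le hfL
  subst hμb hLb hη hρ
  have hκ : 1 ≤ Lf / μf * (1 / μφ / (1 / Lφ)) := by
    rw [show 1 / μφ / (1 / Lφ) = Lφ / μφ by field_simp]
    nlinarith [(one_le_div hμf).2 hfL, (one_le_div hμφ).2 hφL]
  refine ⟨by positivity, div_nonneg (by linarith) (by linarith), ?_, ?_, ?_⟩
  · rw [div_le_one (by linarith)]
    linarith
  · field_simp
    ring
  · field_simp
    ring

lemma mirror_descent_error_eq [DecidableEq n] {F Φ : Matrix n n ℝ} {p zopt : n → ℝ}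
    (hΦ : IsUnit Φ.det) (hopt : F *ᵥ (Φ⁻¹ *ᵥ zopt) + p = 0) (η : ℝ) (z : n → ℝ) :
    z - η • (F *ᵥ (Φ⁻¹ *ᵥ z) + p) - zopt = (Φ - η • F) *ᵥ (Φ⁻¹ *ᵥ (z - zopt)) := by
  rw [sub_mulVec, smul_mulVec, mulVec_nonsing_inv_mulVec hΦ, mulVec_sub, mulVec_sub,
    eq_neg_of_add_eq_zero_left hopt]
  module

theorem mirror_descent_quadratic_rate_general (d : ℕ) (F Φ : Matrix (Fin d) (Fin d) ℝ)
    (p : Fin d → ℝ)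
    (hF : F.PosDef) (hΦ : Φ.PosDef)
    (μf Lf μφ Lφ : ℝ) (hμf : 0 < μf) (hfL : μf ≤ Lf) (hμφ : 0 < μφ) (hφL : μφ ≤ Lφ)
    (h1 : (F - μf • (1 : Matrix (Fin d) (Fin d) ℝ)).PosSemidef)
    (h2 : (Lf • (1 : Matrix (Fin d) (Fin d) ℝ) - F).PosSemidef)
    (h3 : (Φ - μφ • (1 : Matrix (Fin d) (Fin d) ℝ)).PosSemidef)
    (h4 : (Lφ • (1 : Matrix (Fin d) (Fin d) ℝ) - Φ).PosSemidef)
    (μb Lb η ρ : ℝ) (hμb : μb = 1 / Lφ) (hLb : Lb = 1 / μφ)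
    (hη : η = 2 / (Lf * Lb + μf * μb))
    (hρ : ρ = ((Lf / μf) * (Lb / μb) - 1) / ((Lf / μf) * (Lb / μb) + 1))
    (z : ℕ → Fin d → ℝ)
    (hz : ∀ k, z (k + 1) = z k - η • (F.mulVec (Φ⁻¹.mulVec (z k)) + p))
    (xopt zopt : Fin d → ℝ)
    (hx : xopt = -(F⁻¹.mulVec p)) (hzopt : zopt = Φ.mulVec xopt) :
    ∃ c > 0, ∀ k : ℕ, ‖z k - zopt‖ ≤ c * ρ ^ k * ‖z 0 - zopt‖ := by
  obtain ⟨hη0, hρ0, hρ1, hlow, hup⟩ := mirror_descent_rate_spec hμf hfL hμφ hφL hμb hLb hη hρ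
  have hLφ : 0 < Lφ := hμφ.trans_le hφL
  have hdet : IsUnit Φ.det := hΦ.det_pos.ne'.isUnit
  have hadd : (ρ • Φ + (Φ - η • F)).PosSemidef := by
    rw [show ρ • Φ + (Φ - η • F) = (1 + ρ) • Φ - η • F by module]
    exact posSemidef_smul_sub_smul hη0.le (by linarith) h3 h2 (by linarith)
  have hsub : (ρ • Φ - (Φ - η • F)).PosSemidef := by
    rw [show ρ • Φ - (Φ - η • F) = η • F - (1 - ρ) • Φ by module]
    exact posSemidef_smul_sub_smul (by linarith) hη0.le h1 h4 hlow
  have hopt : F *ᵥ (Φ⁻¹ *ᵥ zopt) + p = 0 := by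
    rw [hzopt, nonsing_inv_mulVec_mulVec hdet, hx, mulVec_neg,
      mulVec_nonsing_inv_mulVec hF.det_pos.ne'.isUnit, neg_add_cancel]
  set V : ℕ → ℝ := fun k => (z k - zopt) ⬝ᵥ Φ⁻¹ *ᵥ (z k - zopt)
  have hV : ∀ k, V k ≤ (ρ ^ 2) ^ k * V 0 := fun k => le_geom (sq_nonneg ρ) k fun j _ => by
    simpa only [V, hz, mirror_descent_error_eq hdet hopt] using
      hΦ.dotProduct_inv_mulVec_contract hρ0 hadd hsub (z j - zopt)
  refine exists_pos_le_mul_pow_of_sq_le (C := Lφ * (d / μφ)) (by positivity) (norm_nonneg _)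
    hρ0 fun k => ?_
  have hV0 : V 0 ≤ d / μφ * ‖z 0 - zopt‖ ^ 2 := by
    simpa only [Fintype.card_fin] using
      dotProduct_inv_mulVec_le_card_div_mul_sq_norm hμφ h3 (z 0 - zopt)
  calc ‖z k - zopt‖ ^ 2 ≤ Lφ * V k := sq_norm_le_mul_dotProduct_inv_mulVec hΦ hLφ h4 _
    _ ≤ Lφ * ((ρ ^ 2) ^ k * (d / μφ * ‖z 0 - zopt‖ ^ 2)) := by
        gcongr
        exact (hV k).trans (by gcongr)
    _ = Lφ * (d / μφ) * (ρ ^ k * ‖z 0 - zopt‖) ^ 2 := by ring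

/-- Linear convergence of mirror descent with quadratic objective and quadratic
distance generating function, with the optimal stepsize and rate (κ_f κ_φ̄ - 1)/(κ_f κ_φ̄ + 1). -/
theorem mirror_descent_quadratic_rate (d : ℕ) (F Φ : Matrix (Fin d) (Fin d) ℝ)
    (p : Fin d → ℝ) (r : ℝ)
    (hF : F.PosDef) (hΦ : Φ.PosDef)
    (μf Lf μφ Lφ : ℝ) (hμf : 0 < μf) (hfL : μf ≤ Lf) (hμφ : 0 < μφ) (hφL : μφ ≤ Lφ)
    (h1 : (F - μf • (1 : Matrix (Fin d) (Fin d) ℝ)).PosSemidef)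
    (h2 : (Lf • (1 : Matrix (Fin d) (Fin d) ℝ) - F).PosSemidef)
    (h3 : (Φ - μφ • (1 : Matrix (Fin d) (Fin d) ℝ)).PosSemidef)
    (h4 : (Lφ • (1 : Matrix (Fin d) (Fin d) ℝ) - Φ).PosSemidef)
    (μb Lb η ρ : ℝ) (hμb : μb = 1 / Lφ) (hLb : Lb = 1 / μφ)
    (hη : η = 2 / (Lf * Lb + μf * μb))
    (hρ : ρ = ((Lf / μf) * (Lb / μb) - 1) / ((Lf / μf) * (Lb / μb) + 1))
    (z : ℕ → Fin d → ℝ)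
    (hz : ∀ k, z (k + 1) = z k - η • (F.mulVec (Φ⁻¹.mulVec (z k)) + p))
    (xopt zopt : Fin d → ℝ)
    (hx : xopt = -(F⁻¹.mulVec p)) (hzopt : zopt = Φ.mulVec xopt) :
    ∃ c > 0, ∀ k : ℕ, ‖z k - zopt‖ ≤ c * ρ ^ k * ‖z 0 - zopt‖ :=
  mirror_descent_quadratic_rate_general d F Φ p hF hΦ μf Lf μφ Lφ hμf hfL hμφ hφL h1 h2 h3 h4 μb Lb
    η ρ hμb hLb hη hρ z hz xopt zopt hx hzopt
end

section
/- Let 0 < μ_f < L_f, 0 < μ_φ̄ < L_φ̄, η > 0. Set α₁* = (L_φ̄ − μ_φ̄)²/(4 L_f L_φ̄ μ_f μ_φ̄) and β₂* = (α₁*(L_f + μ_f) + 2√((α₁*)² L_f μ_f + α₁*))/η. Then with α₂ = 1, β₁ = 0, α₁ = α₁*, β₂ = β₂*, the polynomial p(ω) = (−η²β₂² + 2α₁η(L_f+μ_f)β₂ + 4α₁α₂ − α₁²(L_f−μ_f)² + 2α₂β₁η L_φ̄ + 2α₂β₁ημ_φ̄)ω² − β₁²ω⁴ + η²(4α₁α₂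 L_f μ_f L_φ̄ μ_φ̄ − α₂²(L_φ̄−μ_φ̄)²) is identically zero; moreover there exist α₁ > α₁* and 0 < β₂ < β₂* such that p(ω) > 0 for all ω ∈ ℝ. -/
/-!
With α₂ = 1 and β₁ = 0 the quartic is `C ω² + η² K` with
`C = 4 (α₁² L_f μ_f + α₁) - (η β₂ - α₁ (L_f + μ_f))²` and `K = 4 α₁ L_f μ_f L_φ̄ μ_φ̄ - (L_φ̄ - μ_φ̄)²`.
The constant `K` is affine increasing in `α₁` and vanishes exactly at `α₁*`, while `C` is a concave
quadratic in `η β₂` whose larger root is `η β₂*`; so both vanish at `(α₁*, β₂*)`. Raising `α₁` to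
`α₁* + s/(L_f + μ_f)`, with `s = √(α₁*² L_f μ_f + α₁*)`, and taking `η β₂ = α₁ (L_f + μ_f)` at the
vertex of `C` makes both coefficients positive, and this `η β₂` lies strictly between `0` and `η β₂*`.
-/

/-- The quartic polynomial from the frequency-domain inequality of the Sector + Popov IQC
feasibility computation for continuous-time mirror descent. -/
def freqPoly (η μf Lf μb Lb α₁ α₂ β₁ β₂ ω : ℝ) : ℝ :=
  -β₁ ^ 2 * ω ^ 4 +
    (-η ^ 2 * β₂ ^ 2 + 2 * α₁ * η * (Lf + μf) * β₂ + 4 * α₁ * α₂ -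
        α₁ ^ 2 * (Lf - μf) ^ 2 + 2 * α₂ * β₁ * η * Lb + 2 * α₂ * β₁ * η * μb) * ω ^ 2 +
    η ^ 2 * (4 * α₁ * α₂ * Lf * μf * Lb * μb - α₂ ^ 2 * (Lb - μb) ^ 2)

theorem freqPoly_one_zero_eq (η μf Lf μb Lb α₁ β₂ ω : ℝ) :
    freqPoly η μf Lf μb Lb α₁ 1 0 β₂ ω =
      (4 * (α₁ ^ 2 * Lf * μf + α₁) - (η * β₂ - α₁ * (Lf + μf)) ^ 2) * ω ^ 2 +
        η ^ 2 * (4 * α₁ * Lf * μf * Lb * μb - (Lb - μb) ^ 2) := by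
  unfold freqPoly
  ring

theorem sector_coeff_eq_mul_sub {μf Lf μb Lb α₁s : ℝ} (hf : μf ≠ 0) (hLf : Lf ≠ 0) (hb : μb ≠ 0)
    (hLb : Lb ≠ 0) (hα : α₁s = (Lb - μb) ^ 2 / (4 * Lf * Lb * μf * μb)) (α₁ : ℝ) :
    4 * α₁ * Lf * μf * Lb * μb - (Lb - μb) ^ 2 = 4 * Lf * μf * Lb * μb * (α₁ - α₁s) := by
  subst hα
  field_simp

/-- Feasibility of the strict frequency-domain inequality: at (α₁*, β₂*) the polynomial is
identically zero, and nearby parameters make it strictly positive for all ω. -/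
theorem freq_domain_feasibility (η μf Lf μb Lb α₁s β₂s : ℝ)
    (hη : 0 < η) (hf : 0 < μf) (hfL : μf < Lf) (hb : 0 < μb) (hbL : μb < Lb)
    (hα : α₁s = (Lb - μb) ^ 2 / (4 * Lf * Lb * μf * μb))
    (hβ : β₂s = (α₁s * (Lf + μf) + 2 * Real.sqrt (α₁s ^ 2 * Lf * μf + α₁s)) / η) :
    (∀ ω : ℝ, freqPoly η μf Lf μb Lb α₁s 1 0 β₂s ω = 0) ∧
      ∃ α₁ > α₁s, ∃ β₂ : ℝ, 0 < β₂ ∧ β₂ < β₂s ∧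
        ∀ ω : ℝ, 0 < freqPoly η μf Lf μb Lb α₁ 1 0 β₂ ω := by
  have hLf : 0 < Lf := hf.trans hfL
  have hLb : 0 < Lb := hb.trans hbL
  have hsector := sector_coeff_eq_mul_sub hf.ne' hLf.ne' hb.ne' hLb.ne' hα
  have hα₁s : 0 < α₁s := hα ▸ div_pos (pow_pos (sub_pos.2 hbL) 2) (by positivity)
  set s := Real.sqrt (α₁s ^ 2 * Lf * μf + α₁s)
  have hs : 0 < s := Real.sqrt_pos.2 (by positivity)
  have hs_sq : s ^ 2 = α₁s ^ 2 * Lf * μf + α₁s := Real.sq_sqrt (by positivity)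
  have hηβ₂s : η * β₂s = α₁s * (Lf + μf) + 2 * s := by rw [hβ]; field_simp
  have hvertex : (α₁s + s / (Lf + μf)) * (Lf + μf) = α₁s * (Lf + μf) + s := by
    field_simp
  refine ⟨fun ω => ?_, α₁s + s / (Lf + μf), lt_add_of_pos_right _ (by positivity),
    (α₁s * (Lf + μf) + s) / η, by positivity, ?_, fun ω => ?_⟩
  · rw [freqPoly_one_zero_eq, hsector, hηβ₂s]
    linear_combination -4 * ω ^ 2 * hs_sq
  · rw [hβ, div_lt_div_iff_of_pos_right hη]
    linarith
  · rw [freqPoly_one_zero_eq, hsector, mul_div_cancel₀ _ hη.ne', ← hvertex, sub_self,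
      zero_pow two_ne_zero, sub_zero, add_sub_cancel_left]
    positivity
end
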